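/- Let m ≥ 1 and n ≠ 0 be integers and let x, y ∈ ℂ. Define z = 2 + (y−2)(y+2−x²)·S_{m−1}(y)² and t = 1 − (y+2−x²)·S_{m−1}(y)·(S_m(y) − (y−1)S_{m−1}(y)). If t·S_{n−1}(z) − S_{n−2}(z) = 0, then S_{m−1}(y) ≠ 0 and S_{n−1}(z) ≠ 0. -/

import Mathlib

open Polynomial

/-- Integer-indexed Chebyshev-like polynomials: `S 0 = 1`, `S 1 = X`,
and `S (l+1) = X * S l - S (l-1)` for all `l : ℤ`
(equivalently `S l = U_l (v/2)` for the Chebyshev polynomials `U` of the second kind). -/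
@[semireducible] noncomputable def chebS (R : Type*) [CommRing R] : ℤ → R[X]
  | 0 => 1
  | 1 => X
  | (n : ℕ) + 2 => X * chebS R (n + 1) - chebS R n
  | -((n : ℕ) + 1) => X * chebS R (-n) - chebS R (-n + 1)
  termination_by n => Int.natAbs n + Int.natAbs (n - 1)

/-!
If `S_{m-1}(y) = 0` then `z = 2` and `t = 1`, and since `S_l(2) = l + 1` the Riley polynomial
takes the value `n - (n - 1) = 1`. If `S_{n-1}(z) = 0`, the Riley equation forces
`S_{n-2}(z) = 0` as well, which the Cassini-type identity `S_l² + S_{l+1}² - v S_l S_{l+1} = 1`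
rules out.
-/

theorem chebS_eq_chebyshev_S (R : Type*) [CommRing R] : chebS R = Chebyshev.S R := by
  funext n
  induction n using Chebyshev.induct with
  | zero => rw [chebS.eq_1, Chebyshev.S_zero]
  | one => rw [chebS.eq_2, Chebyshev.S_one]
  | add_two n ih1 ih2 => rw [Chebyshev.S_add_two, ← ih1, ← ih2]; exact chebS.eq_3 R n
  | neg_add_one n ih1 ih2 =>
    rw [Chebyshev.S_sub_one, ← ih1, ← ih2, show -(n : ℤ) - 1 = Int.negSucc n by omega]
    exact chebS.eq_4 R n

namespace Polynomial.Chebyshev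

theorem S_eval_sub_one_ne_zero {R : Type*} [CommRing R] [Nontrivial R] {n : ℤ} {x : R}
    (h : (S R n).eval x = 0) : (S R (n - 1)).eval x ≠ 0 := by
  intro h'
  have cassini := congrArg (eval x) (S_sq_add_S_sq R (n - 1))
  simp [h, h'] at cassini

end Polynomial.Chebyshev

theorem even_Riley_nonvanishing_general (m n : ℤ) (x y z t : ℂ)
    (hz : z = 2 + (y - 2) * (y + 2 - x^2) * ((chebS ℂ (m - 1)).eval y) ^ 2)
    (ht : t = 1 - (y + 2 - x^2) * (chebS ℂ (m - 1)).eval y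
            * ((chebS ℂ m).eval y - (y - 1) * (chebS ℂ (m - 1)).eval y))
    (hR : t * (chebS ℂ (n - 1)).eval z - (chebS ℂ (n - 2)).eval z = 0) :
    (chebS ℂ (m - 1)).eval y ≠ 0 ∧ (chebS ℂ (n - 1)).eval z ≠ 0 := by
  rw [chebS_eq_chebyshev_S] at *
  rw [show n - 2 = n - 1 - 1 by ring] at hR
  refine ⟨fun hy => ?_, fun hz₀ => Chebyshev.S_eval_sub_one_ne_zero hz₀ ?_⟩
  · obtain rfl : z = 2 := by simpa [hy] using hz
    obtain rfl : t = 1 := by simpa [hy] using ht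
    simp only [Chebyshev.S_eval_two, one_mul] at hR
    norm_num at hR
  · simpa [hz₀] using hR

/-- If the Riley polynomial `t·S_{n-1}(z) - S_{n-2}(z)` of the even double twist knot
`J(2m, 2n)` vanishes, then `S_{m-1}(y) ≠ 0` and `S_{n-1}(z) ≠ 0`. -/
theorem even_Riley_nonvanishing (m n : ℤ) (hm : 1 ≤ m) (hn : n ≠ 0) (x y z t : ℂ)
    (hz : z = 2 + (y - 2) * (y + 2 - x^2) * ((chebS ℂ (m - 1)).eval y) ^ 2)
    (ht : t = 1 - (y + 2 - x^2) * (chebS ℂ (m - 1)).eval y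
            * ((chebS ℂ m).eval y - (y - 1) * (chebS ℂ (m - 1)).eval y))
    (hR : t * (chebS ℂ (n - 1)).eval z - (chebS ℂ (n - 2)).eval z = 0) :
    (chebS ℂ (m - 1)).eval y ≠ 0 ∧ (chebS ℂ (n - 1)).eval z ≠ 0 :=
  even_Riley_nonvanishing_general m n x y z t hz ht hR
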